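/- arXiv:2302.10867 — 2 statements merged into one kernel-verified Lean document; each statement's English description precedes it below -/
import Mathlib

section
/- With notation as in the contraction construction, the inclusion A_t ↪ A[√t^{±1}] extends to an isomorphism of k[√t^{±1}]-algebras A_t ⊗_{k[t^{±1}]} k[√t^{±1}] ≅ A[√t^{±1}]. -/
open LaurentPolynomial

/-- The contraction algebra `𝐀`. -/
noncomputable def contraction (k A : Type*) [CommRing k] [CommRing A] [Algebra k A]
    (θ : A →ₐ[k] A) : Subalgebra k (LaurentPolynomial A) :=
  Algebra.adjoin k (insert (T 2)
    ({f | ∃ a, θ a = a ∧ f = C a} ∪ {f | ∃ a, θ a = -a ∧ f = C a * T (-1)}))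

/-- `A_t`: the `k[t^{±1}]`-subalgebra of `A[√t^{±1}]` generated by `A^θ` and
`(1/√t)·A^{-θ}`, i.e. `A^θ[t^{±1}] ⊕ (1/√t)A^{-θ} ⊗ k[t^{±1}]`. -/
noncomputable def contractionT (k A : Type*) [CommRing k] [CommRing A] [Algebra k A]
    (θ : A →ₐ[k] A) : Subalgebra k (LaurentPolynomial A) :=
  Algebra.adjoin k (insert (T 2) (insert (T (-2))
    ({f | ∃ a, θ a = a ∧ f = C a} ∪ {f | ∃ a, θ a = -a ∧ f = C a * T (-1)})))

/-!
Let `σ` be the involution of `A[√t^{±1}]` that applies `θ` to coefficients and sends `√t` to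
`-√t`. It fixes the generators of `A_t`, hence all of `A_t`; applying `σ` to
`g + √t h = g' + √t h'` with `g, h, g', h' ∈ A_t` gives `g - √t h = g' - √t h'`, and since `2`
is invertible, `g = g'` and `h = h'`. Conversely `A_t + √t A_t` is a subalgebra (because
`t ∈ A_t`) containing `√t^{±1}` and, by `a = (a + θ a)/2 + (a - θ a)/2`, every constant, so it is
everything.
-/

theorem LinearMap.exists_add_eq_of_involutive {R M : Type*} [Ring R] [Invertible (2 : R)]
    [AddCommGroup M] [Module R M] (θ : M →ₗ[R] M) (hθ : Function.Involutive θ) (x : M) :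
    ∃ y z, θ y = y ∧ θ z = -z ∧ y + z = x := by
  refine ⟨(⅟2 : R) • (x + θ x), (⅟2 : R) • (x - θ x), ?_, ?_, ?_⟩
  · rw [map_smul, map_add, hθ, add_comm]
  · rw [map_smul, map_sub, hθ, ← smul_neg, neg_sub]
  · rw [← smul_add, add_add_sub_cancel, ← two_smul R, smul_smul, invOf_mul_self, one_smul]

namespace LaurentPolynomial

theorem mem_of_C_mem_of_T_mem {R : Type*} [Semiring R]
    (S : Subsemiring (LaurentPolynomial R)) (hC : ∀ a, C a ∈ S) (hT : T 1 ∈ S)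
    (hT' : T (-1) ∈ S) (f : LaurentPolynomial R) : f ∈ S := by
  induction f using LaurentPolynomial.induction_on with
  | h_C a => exact hC a
  | h_add hp hq => exact add_mem hp hq
  | h_C_mul_T n a h =>
    rw [T_add, ← mul_assoc]
    exact mul_mem h hT
  | h_C_mul_T_Z n a h =>
    rw [sub_eq_add_neg, T_add, ← mul_assoc]
    exact mul_mem h hT'

theorem T_two_eq_T_one_mul_T_one {R : Type*} [Semiring R] :
    (T 2 : LaurentPolynomial R) = T 1 * T 1 := by
  rw [← T_add]; rfl

variable {A : Type*} [CommRing A]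

noncomputable def negTOne : (LaurentPolynomial A)ˣ where
  val := -T 1
  inv := -T (-1)
  val_inv := by rw [neg_mul_neg, ← T_add, add_neg_cancel, T_zero]
  inv_val := by rw [neg_mul_neg, ← T_add, neg_add_cancel, T_zero]

variable {k : Type*} [CommRing k] [Algebra k A]

noncomputable def signTwist (θ : A →ₐ[k] A) : LaurentPolynomial A →ₐ[k] LaurentPolynomial A :=
  { eval₂ ((C : A →+* _).comp θ.toRingHom) negTOne with
    commutes' r := by simp [algebraMap_apply] }

variable (θ : A →ₐ[k] A)

theorem signTwist_C (a : A) : signTwist θ (C a) = C (θ a) := by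
  simp [signTwist]

theorem signTwist_T_one : signTwist θ (T 1) = -T 1 := by
  simp [signTwist, negTOne]

theorem signTwist_T_neg_one : signTwist θ (T (-1)) = -T (-1) := by
  simp [signTwist, negTOne]

end LaurentPolynomial

section ContractionT

variable {k A : Type*} [CommRing k] [CommRing A] [Algebra k A] (θ : A →ₐ[k] A)

theorem T_two_mem_contractionT : T 2 ∈ contractionT k A θ :=
  Algebra.subset_adjoin (Set.mem_insert _ _)

theorem T_neg_two_mem_contractionT : T (-2) ∈ contractionT k A θ :=
  Algebra.subset_adjoin (Set.mem_insert_of_mem _ (Set.mem_insert _ _))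

theorem C_mem_contractionT {a : A} (ha : θ a = a) : C a ∈ contractionT k A θ :=
  Algebra.subset_adjoin (Set.mem_insert_of_mem _ (Set.mem_insert_of_mem _ (Or.inl ⟨a, ha, rfl⟩)))

theorem C_mul_T_neg_one_mem_contractionT {a : A} (ha : θ a = -a) :
    C a * T (-1) ∈ contractionT k A θ :=
  Algebra.subset_adjoin (Set.mem_insert_of_mem _ (Set.mem_insert_of_mem _ (Or.inr ⟨a, ha, rfl⟩)))

theorem signTwist_eq_self_of_mem_contractionT {f : LaurentPolynomial A}
    (hf : f ∈ contractionT k A θ) : signTwist θ f = f := by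
  suffices contractionT k A θ ≤ AlgHom.equalizer (signTwist θ) (AlgHom.id k _) from this hf
  refine Algebra.adjoin_le ?_
  rintro _ (rfl | rfl | ⟨a, ha, rfl⟩ | ⟨a, ha, rfl⟩) <;>
    simp only [SetLike.mem_coe, AlgHom.mem_equalizer, AlgHom.id_apply]
  · rw [T_two_eq_T_one_mul_T_one, map_mul, signTwist_T_one, neg_mul_neg]
  · rw [show (-2 : ℤ) = -1 + -1 by rfl, T_add, map_mul, signTwist_T_neg_one, neg_mul_neg]
  · rw [signTwist_C, ha]
  · rw [map_mul, signTwist_C, signTwist_T_neg_one, ha, map_neg, neg_mul_neg]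

theorem eq_of_add_T_one_mul_eq [Invertible (2 : k)] {g h g' h' : LaurentPolynomial A}
    (hg : g ∈ contractionT k A θ) (hh : h ∈ contractionT k A θ)
    (hg' : g' ∈ contractionT k A θ) (hh' : h' ∈ contractionT k A θ)
    (heq : g + T 1 * h = g' + T 1 * h') : g = g' ∧ h = h' := by
  have hσ : g - T 1 * h = g' - T 1 * h' := by
    simpa only [map_add, map_mul, signTwist_T_one, signTwist_eq_self_of_mem_contractionT θ hg,
      signTwist_eq_self_of_mem_contractionT θ hh, signTwist_eq_self_of_mem_contractionT θ hg',
      signTwist_eq_self_of_mem_contractionT θ hh', neg_mul, ← sub_eq_add_neg]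
      using congrArg (signTwist θ) heq
  have hgg : g = g' := by
    refine (isUnit_of_invertible (2 : k)).smul_left_cancel.mp ?_
    rw [two_smul, two_smul]
    linear_combination heq + hσ
  refine ⟨hgg, (isUnit_T 1).mul_left_cancel ?_⟩
  linear_combination heq - hgg

noncomputable def contractionTAdjoinSqrt : Subalgebra k (LaurentPolynomial A) where
  carrier := {f | ∃ g ∈ contractionT k A θ, ∃ h ∈ contractionT k A θ, g + T 1 * h = f}
  mul_mem' := by
    rintro _ _ ⟨g, hg, h, hh, rfl⟩ ⟨g', hg', h', hh', rfl⟩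
    refine ⟨g * g' + T 2 * (h * h'), add_mem (mul_mem hg hg')
      (mul_mem (T_two_mem_contractionT θ) (mul_mem hh hh')), g * h' + h * g',
      add_mem (mul_mem hg hh') (mul_mem hh hg'), ?_⟩
    rw [T_two_eq_T_one_mul_T_one]
    ring
  add_mem' := by
    rintro _ _ ⟨g, hg, h, hh, rfl⟩ ⟨g', hg', h', hh', rfl⟩
    exact ⟨g + g', add_mem hg hg', h + h', add_mem hh hh', by ring⟩
  algebraMap_mem' r :=
    ⟨algebraMap k _ r, Subalgebra.algebraMap_mem _ r, 0, zero_mem _, by rw [mul_zero, add_zero]⟩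

theorem T_one_mem_contractionTAdjoinSqrt : T 1 ∈ contractionTAdjoinSqrt θ :=
  ⟨0, zero_mem _, 1, one_mem _, by rw [zero_add, mul_one]⟩

theorem T_neg_one_mem_contractionTAdjoinSqrt : T (-1) ∈ contractionTAdjoinSqrt θ :=
  ⟨0, zero_mem _, T (-2), T_neg_two_mem_contractionT θ, by rw [zero_add, ← T_add]; rfl⟩

theorem C_mem_contractionTAdjoinSqrt [Invertible (2 : k)] (hθ : Function.Involutive θ) (a : A) :
    C a ∈ contractionTAdjoinSqrt θ := by
  obtain ⟨b, c, hb, hc, rfl⟩ := LinearMap.exists_add_eq_of_involutive θ.toLinearMap hθ a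
  refine ⟨C b, C_mem_contractionT θ hb, C c * T (-1), C_mul_T_neg_one_mem_contractionT θ hc, ?_⟩
  rw [mul_left_comm, ← T_add, add_neg_cancel, T_zero, mul_one, map_add]

theorem exists_add_T_one_mul_eq [Invertible (2 : k)] (hθ : Function.Involutive θ)
    (f : LaurentPolynomial A) :
    ∃ g ∈ contractionT k A θ, ∃ h ∈ contractionT k A θ, g + T 1 * h = f :=
  mem_of_C_mem_of_T_mem (contractionTAdjoinSqrt θ).toSubsemiring
    (C_mem_contractionTAdjoinSqrt θ hθ) (T_one_mem_contractionTAdjoinSqrt θ)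
    (T_neg_one_mem_contractionTAdjoinSqrt θ) f

end ContractionT

/-- As `k[√t^{±1}]` is free over `k[t^{±1}]` with basis `{1, √t}`, the base change isomorphism
amounts to this unique decomposition. -/
theorem contractionT_baseChange_sqrt
    (k A : Type*) [CommRing k] [CommRing A] [Algebra k A] [Invertible (2 : k)]
    (θ : A →ₐ[k] A) (hθ : θ.comp θ = AlgHom.id k A) :
    ∀ f : LaurentPolynomial A,
      ∃! p : ↥(contractionT k A θ) × ↥(contractionT k A θ),
        f = (p.1 : LaurentPolynomial A) + T 1 * (p.2 : LaurentPolynomial A) := by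
  intro f
  obtain ⟨g, hg, h, hh, rfl⟩ := exists_add_T_one_mul_eq θ (AlgHom.congr_fun hθ) f
  refine ⟨(⟨g, hg⟩, ⟨h, hh⟩), rfl, fun p hp => ?_⟩
  obtain ⟨h₁, h₂⟩ := eq_of_add_T_one_mul_eq θ p.1.2 p.2.2 hg hh hp.symm
  exact Prod.ext (Subtype.ext h₁) (Subtype.ext h₂)
end

section
/- Let f ∈ A^{-θ}, i.e., θ(f) = −f. Then θ extends uniquely to an involution of A_f, and the contraction algebra of (A_f, θ) is canonically isomorphic to the localization of 𝐀 at the element √t·f ∈ 𝐀. -/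
open LaurentPolynomial

theorem CMulT_mem_contraction {k A : Type*} [CommRing k] [CommRing A] [Algebra k A]
    (θ : A →ₐ[k] A) {f : A} (hf : θ f = -f) :
    (C f * T 1 : LaurentPolynomial A) ∈ contraction k A θ := by
  have h1 : (C f * T (-1) : LaurentPolynomial A) ∈ contraction k A θ :=
    Algebra.subset_adjoin (Set.mem_insert_iff.mpr
      (Or.inr (Set.mem_union_right _ ⟨f, hf, rfl⟩)))
  have h2 : (T 2 : LaurentPolynomial A) ∈ contraction k A θ :=
    Algebra.subset_adjoin (Set.mem_insert _ _)
  have hmul := mul_mem h1 h2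
  have heq : (C f * T (-1) * T 2 : LaurentPolynomial A) = C f * T 1 := by
    rw [mul_assoc, ← T_add]; norm_num
  rwa [heq] at hmul

/-!
Since `θ f = -f` is a unit of `A_f`, `θ` extends uniquely to `A_f`, and the extension is an
involution because it is determined by its values on `A`. The coefficientwise map `Φ` sends
`𝐀` into the contraction algebra `𝐀_f` of `A_f` and sends `√t·f` to a unit of `𝐀_f`, with inverse
`(1/√t)·f⁻¹`. Every generator of `𝐀_f` becomes the image of an element of `𝐀` after
multiplication by `(√t·f)^{2m} = t^m f^{2m}`: since `f²` is `θ`-fixed, an eigenvector `a` of `θ`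
with eigenvalue `±1` has, after enlarging `m`, a numerator `a f^{2m}` that is an eigenvector in
`A` with the same eigenvalue. Finally an element of `𝐀` killed by `Φ` has each coefficient killed
by a power of `f`, hence is killed by a power of `√t·f`. These are exactly the conditions for
`𝐀_f` to be the localization of `𝐀` away from `√t·f`.
-/

section Contraction

variable {k A : Type*} [CommRing k] [CommRing A] [Algebra k A]

theorem T_two_mem_contraction (θ : A →ₐ[k] A) : (T 2 : A[T;T⁻¹]) ∈ contraction k A θ :=
  Algebra.subset_adjoin (Set.mem_insert _ _)

theorem C_mem_contraction {θ : A →ₐ[k] A} {a : A} (ha : θ a = a) :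
    C a ∈ contraction k A θ :=
  Algebra.subset_adjoin (Or.inr (Or.inl ⟨a, ha, rfl⟩))

theorem C_mul_T_neg_one_mem_contraction {θ : A →ₐ[k] A} {a : A} (ha : θ a = -a) :
    C a * T (-1) ∈ contraction k A θ :=
  Algebra.subset_adjoin (Or.inr (Or.inr ⟨a, ha, rfl⟩))

theorem isUnit_C_mul_T_one_of_antifixed {θ : A →ₐ[k] A} {u : A} (hu : IsUnit u)
    (hθu : θ u = -u) :
    IsUnit (⟨C u * T 1, CMulT_mem_contraction θ hθu⟩ : contraction k A θ) := by
  obtain ⟨v, hv⟩ := isUnit_iff_exists_inv.mp hu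
  have hθv : θ v = -v := by
    have h : -u * θ v = 1 := by rw [← hθu, ← map_mul, hv, map_one]
    linear_combination (-θ v) * hv - v * h
  refine IsUnit.of_mul_eq_one ⟨C v * T (-1), C_mul_T_neg_one_mem_contraction hθv⟩
    (Subtype.ext ?_)
  change C u * T 1 * (C v * T (-1)) = 1
  rw [mul_mul_mul_comm, ← C.map_mul, hv, ← T_add, add_neg_cancel, T_zero, map_one, one_mul]

theorem C_mul_T_pow {R : Type*} [CommSemiring R] (a : R) (n : ℤ) (N : ℕ) :
    (C a * T n) ^ N = C (a ^ N) * T (N * n) := by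
  rw [mul_pow, map_pow, T_pow]

variable {B : Type*} [CommRing B] [Algebra k B]

theorem contraction_le_comap {θ : A →ₐ[k] A} {θB : B →ₐ[k] B} {g : A →+* B}
    (hg : ∀ x, θB (g x) = g (θ x)) {Φ : A[T;T⁻¹] →ₐ[k] B[T;T⁻¹]}
    (hΦ : ∀ (a : A) (n : ℤ), Φ (C a * T n) = C (g a) * T n) :
    contraction k A θ ≤ (contraction k B θB).comap Φ := by
  refine Algebra.adjoin_le ?_
  rintro _ (rfl | ⟨a, ha, rfl⟩ | ⟨a, ha, rfl⟩)
  · have h : Φ (T 2) = T 2 := by simpa using hΦ 1 2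
    simpa [h] using T_two_mem_contraction θB
  · have h : Φ (C a) = C (g a) := by simpa using hΦ a 0
    simpa [h] using C_mem_contraction (show θB (g a) = g a by rw [hg, ha])
  · simpa [hΦ] using C_mul_T_neg_one_mem_contraction (show θB (g a) = -g a by rw [hg, ha, map_neg])

theorem coeff_map_of_map_C_mul_T {g : A →+* B} {Φ : A[T;T⁻¹] →ₐ[k] B[T;T⁻¹]}
    (hΦ : ∀ (a : A) (n : ℤ), Φ (C a * T n) = C (g a) * T n) (p : A[T;T⁻¹]) (n : ℤ) :
    (Φ p).coeff n = g (p.coeff n) := by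
  induction p using LaurentPolynomial.induction_on' with
  | add p q hp hq => simp [hp, hq]
  | C_mul_T m a =>
    rw [hΦ]
    simp only [← single_eq_C_mul_T, AddMonoidAlgebra.coeff_single, Finsupp.single_apply]
    split_ifs <;> simp

end Contraction

section Localization

variable {k A R : Type*} [CommRing k] [CommRing A] [Algebra k A] [CommRing R] [Algebra A R]
  [Algebra k R] {f : A}

theorem existsUnique_algHom_extend_away [IsScalarTower k A R] [IsLocalization.Away f R]
    {θ : A →ₐ[k] A} (hunit : IsUnit (algebraMap A R (θ f))) :
    ∃! θR : R →ₐ[k] R, ∀ x, θR (algebraMap A R x) = algebraMap A R (θ x) := by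
  have hM : ∀ y : Submonoid.powers f, IsUnit ((IsScalarTower.toAlgHom k A R).comp θ y) := by
    rintro ⟨_, n, rfl⟩
    simpa using hunit.pow n
  refine ⟨IsLocalization.liftAlgHom hM, fun x => IsLocalization.lift_eq hM x, ?_⟩
  intro θR hθR
  refine IsLocalization.algHom_ext (Submonoid.powers f) (AlgHom.ext fun x => ?_)
  change θR (algebraMap A R x) = IsLocalization.lift hM (algebraMap A R x)
  rw [hθR, IsLocalization.lift_eq]
  rfl

theorem comp_self_eq_id_of_extends [IsScalarTower k A R] (M : Submonoid A) [IsLocalization M R]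
    {θ : A →ₐ[k] A} (hθ : θ.comp θ = AlgHom.id k A) {θR : R →ₐ[k] R}
    (hθR : ∀ x, θR (algebraMap A R x) = algebraMap A R (θ x)) :
    θR.comp θR = AlgHom.id k R :=
  IsLocalization.algHom_ext M <| AlgHom.ext fun x => by
    change θR (θR (algebraMap A R x)) = algebraMap A R x
    rw [hθR, hθR, ← AlgHom.comp_apply, hθ, AlgHom.id_apply]

theorem exists_pow_mul_eq_zero_of_map_eq_zero [IsLocalization.Away f R]
    {Φ : A[T;T⁻¹] →ₐ[k] R[T;T⁻¹]}
    (hΦ : ∀ (a : A) (n : ℤ), Φ (C a * T n) = C (algebraMap A R a) * T n)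
    {p : A[T;T⁻¹]} (hp : Φ p = 0) : ∃ N : ℕ, (C f * T 1) ^ N * p = 0 := by
  have hcoeff : ∀ n, ∃ m : ℕ, f ^ m * p.coeff n = 0 := fun n => by
    obtain ⟨m, hm⟩ := IsLocalization.Away.exists_of_eq (S := R) f (a := p.coeff n) (b := 0)
      (by rw [← coeff_map_of_map_C_mul_T hΦ, hp, map_zero]; rfl)
    exact ⟨m, by simpa using hm⟩
  choose m hm using hcoeff
  refine ⟨p.coeff.support.sup m, ?_⟩
  suffices h : f ^ p.coeff.support.sup m • p = 0 by
    rw [C_mul_T_pow, mul_right_comm, ← smul_eq_C_mul, h, zero_mul]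
  ext n
  by_cases hn : n ∈ p.coeff.support
  · rw [AddMonoidAlgebra.coeff_smul, Finsupp.smul_apply, smul_eq_mul,
      ← pow_sub_mul_pow f (Finset.le_sup hn), mul_assoc, hm, mul_zero]
    rfl
  · simp [Finsupp.notMem_support_iff.mp hn]

theorem exists_mul_pow_two_mul_eq_algebraMap [IsLocalization.Away f R] {θ : A →ₐ[k] A}
    (hf : θ f = -f) {θR : R →ₐ[k] R}
    (hθR : ∀ x, θR (algebraMap A R x) = algebraMap A R (θ x)) {c : ℤ} {a : R}
    (ha : θR a = c • a) :
    ∃ (m : ℕ) (x : A), θ x = c • x ∧ a * algebraMap A R f ^ (2 * m) = algebraMap A R x := by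
  have hθ_even : ∀ j : ℕ, θ (f ^ (2 * j)) = f ^ (2 * j) := fun j => by
    rw [map_pow, hf, pow_mul, pow_mul, neg_sq]
  obtain ⟨n, y, hy⟩ := IsLocalization.Away.surj f a
  have hx : a * algebraMap A R f ^ (2 * n) = algebraMap A R (y * f ^ n) := by
    rw [map_mul, ← hy, map_pow]
    ring
  have hθx : algebraMap A R (θ (y * f ^ n)) = algebraMap A R (c • (y * f ^ n)) := by
    have h := congrArg θR hx
    rw [map_mul, ha, ← map_pow, hθR, hθ_even, map_pow, hθR] at h
    rw [← h, map_zsmul, ← hx, smul_mul_assoc]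
  obtain ⟨l, hl⟩ := IsLocalization.Away.exists_of_eq f hθx
  refine ⟨n + l, f ^ (2 * l) * (y * f ^ n), ?_, ?_⟩
  · simp only [zsmul_eq_mul] at hl ⊢
    rw [map_mul, hθ_even]
    linear_combination f ^ l * hl
  · rw [map_mul, ← hx, map_pow]
    ring

theorem C_mul_T_mul_pow_eq_map {Φ : A[T;T⁻¹] →ₐ[k] R[T;T⁻¹]}
    (hΦ : ∀ (a : A) (n : ℤ), Φ (C a * T n) = C (algebraMap A R a) * T n)
    {a : R} {x : A} {m : ℕ} (hx : a * algebraMap A R f ^ (2 * m) = algebraMap A R x) (j : ℤ) :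
    C a * T j * (C (algebraMap A R f) * T 1) ^ (2 * m) = Φ (C x * T j * T 2 ^ m) := by
  have hT2 : Φ (T 2) = T 2 := by simpa using hΦ 1 2
  rw [map_mul, map_pow, hΦ, hT2, C_mul_T_pow, T_pow, ← hx, map_mul]
  push_cast
  ring_nf

theorem exists_mul_pow_eq_map_of_mem_contraction [IsLocalization.Away f R] {θ : A →ₐ[k] A}
    (hf : θ f = -f) {θR : R →ₐ[k] R}
    (hθR : ∀ x, θR (algebraMap A R x) = algebraMap A R (θ x)) {Φ : A[T;T⁻¹] →ₐ[k] R[T;T⁻¹]}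
    (hΦ : ∀ (a : A) (n : ℤ), Φ (C a * T n) = C (algebraMap A R a) * T n)
    {z : R[T;T⁻¹]} (hz : z ∈ contraction k R θR) :
    ∃ N : ℕ, ∃ x ∈ contraction k A θ, z * (C (algebraMap A R f) * T 1) ^ N = Φ x := by
  induction hz using Algebra.adjoin_induction with
  | algebraMap r =>
    exact ⟨0, algebraMap k _ r, Subalgebra.algebraMap_mem _ r,
      by rw [pow_zero, mul_one, AlgHom.commutes]⟩
  | add z₁ z₂ _ _ ih₁ ih₂ =>
    obtain ⟨N₁, x₁, hx₁, e₁⟩ := ih₁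
    obtain ⟨N₂, x₂, hx₂, e₂⟩ := ih₂
    have hs := CMulT_mem_contraction θ hf
    refine ⟨N₁ + N₂, x₁ * (C f * T 1) ^ N₂ + x₂ * (C f * T 1) ^ N₁,
      add_mem (mul_mem hx₁ (pow_mem hs N₂)) (mul_mem hx₂ (pow_mem hs N₁)), ?_⟩
    rw [map_add, map_mul, map_mul, map_pow, map_pow, hΦ, ← e₁, ← e₂]
    ring
  | mul z₁ z₂ _ _ ih₁ ih₂ =>
    obtain ⟨N₁, x₁, hx₁, e₁⟩ := ih₁
    obtain ⟨N₂, x₂, hx₂, e₂⟩ := ih₂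
    exact ⟨N₁ + N₂, x₁ * x₂, mul_mem hx₁ hx₂, by rw [map_mul, ← e₁, ← e₂]; ring⟩
  | mem w hw =>
    rcases hw with rfl | ⟨a, ha, rfl⟩ | ⟨a, ha, rfl⟩
    · exact ⟨0, T 2, T_two_mem_contraction θ, by simpa using (hΦ 1 2).symm⟩
    · obtain ⟨m, x, hθx, hx⟩ :=
        exists_mul_pow_two_mul_eq_algebraMap hf hθR (c := 1) (by simpa using ha)
      refine ⟨2 * m, C x * T 2 ^ m, mul_mem (C_mem_contraction (by simpa using hθx))
        (pow_mem (T_two_mem_contraction θ) m), ?_⟩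
      simpa using C_mul_T_mul_pow_eq_map hΦ hx 0
    · obtain ⟨m, x, hθx, hx⟩ :=
        exists_mul_pow_two_mul_eq_algebraMap hf hθR (c := -1) (by simpa using ha)
      exact ⟨2 * m, C x * T (-1) * T 2 ^ m,
        mul_mem (C_mul_T_neg_one_mem_contraction (by simpa using hθx))
          (pow_mem (T_two_mem_contraction θ) m),
        C_mul_T_mul_pow_eq_map hΦ hx (-1)⟩

end Localization

theorem AlgHom.exists_algEquiv_localizationAway {k S S' : Type*} [CommRing k] [CommRing S]
    [CommRing S'] [Algebra k S] [Algebra k S'] (ψ : S →ₐ[k] S') (s : S) (hunit : IsUnit (ψ s))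
    (surj : ∀ z, ∃ (n : ℕ) (a : S), z * ψ s ^ n = ψ a)
    (exists_of_eq : ∀ a b, ψ a = ψ b → ∃ n : ℕ, s ^ n * a = s ^ n * b) :
    ∃ e : S' ≃ₐ[k] Localization.Away s, ∀ x, e (ψ x) = algebraMap S _ x := by
  let _ : Algebra S S' := ψ.toAlgebra
  have : IsScalarTower k S S' := IsScalarTower.of_algebraMap_eq fun c => (ψ.commutes c).symm
  have : IsLocalization.Away s S' := IsLocalization.Away.mk s hunit surj exists_of_eq
  exact ⟨(IsLocalization.algEquiv (Submonoid.powers s) S' _).restrictScalars k,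
    (IsLocalization.algEquiv (Submonoid.powers s) S' _).commutes⟩

theorem contraction_localization_antifixed_general
    (k A : Type*) [CommRing k] [CommRing A] [Algebra k A]
    (θ : A →ₐ[k] A) (hθ : θ.comp θ = AlgHom.id k A)
    (f : A) (hf : θ f = -f) :
    (∃! θ' : Localization.Away f →ₐ[k] Localization.Away f,
        ∀ x : A, θ' (algebraMap A (Localization.Away f) x) =
          algebraMap A (Localization.Away f) (θ x)) ∧
    ∀ (θ' : Localization.Away f →ₐ[k] Localization.Away f),
      (∀ x : A, θ' (algebraMap A (Localization.Away f) x) =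
          algebraMap A (Localization.Away f) (θ x)) →
      (θ'.comp θ' = AlgHom.id k (Localization.Away f)) ∧
      ∀ (Φ : LaurentPolynomial A →ₐ[k] LaurentPolynomial (Localization.Away f)),
        (∀ (a : A) (n : ℤ),
          Φ (C a * T n) = C (algebraMap A (Localization.Away f) a) * T n) →
        ∃ e : ↥(contraction k (Localization.Away f) θ') ≃ₐ[k]
            Localization.Away
              (⟨C f * T 1, CMulT_mem_contraction θ hf⟩ : ↥(contraction k A θ)),
          ∀ (x : ↥(contraction k A θ))
            (hx : Φ (x : LaurentPolynomial A) ∈ contraction k (Localization.Away f) θ'),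
            e ⟨Φ (x : LaurentPolynomial A), hx⟩ =
              algebraMap ↥(contraction k A θ)
                (Localization.Away
                  (⟨C f * T 1, CMulT_mem_contraction θ hf⟩ : ↥(contraction k A θ))) x := by
  have hunit : IsUnit (algebraMap A (Localization.Away f) f) :=
    IsLocalization.Away.algebraMap_isUnit f
  refine ⟨existsUnique_algHom_extend_away (by rw [hf, map_neg]; exact hunit.neg),
    fun θ' hθ' => ⟨comp_self_eq_id_of_extends (Submonoid.powers f) hθ hθ', fun Φ hΦ => ?_⟩⟩
  set s : contraction k A θ := ⟨C f * T 1, CMulT_mem_contraction θ hf⟩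
  let ψ := (Φ.comp (contraction k A θ).val).codRestrict (contraction k _ θ') fun x =>
    contraction_le_comap hθ' hΦ x.2
  have hθ'f : θ' (algebraMap A _ f) = -algebraMap A _ f := by rw [hθ', hf, map_neg]
  have hψs : ψ s = ⟨C (algebraMap A _ f) * T 1, CMulT_mem_contraction θ' hθ'f⟩ :=
    Subtype.ext (hΦ f 1)
  have hsurj : ∀ z, ∃ (N : ℕ) (x : contraction k A θ), z * ψ s ^ N = ψ x := by
    rintro ⟨z, hz⟩
    obtain ⟨N, x, hx, e⟩ := exists_mul_pow_eq_map_of_mem_contraction hf hθ' hΦ hz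
    exact ⟨N, ⟨x, hx⟩, by rw [hψs]; exact Subtype.ext e⟩
  have hker : ∀ a b, ψ a = ψ b → ∃ N : ℕ, s ^ N * a = s ^ N * b := by
    intro a b hab
    obtain ⟨N, hN⟩ := exists_pow_mul_eq_zero_of_map_eq_zero (f := f) hΦ (p := a - b)
      (by rw [map_sub, sub_eq_zero]; exact congrArg Subtype.val hab)
    exact ⟨N, Subtype.ext (by simpa [s, mul_sub, sub_eq_zero] using hN)⟩
  obtain ⟨e, he⟩ := AlgHom.exists_algEquiv_localizationAway (S := contraction k A θ)
    (S' := contraction k _ θ') ψ s (hψs ▸ isUnit_C_mul_T_one_of_antifixed hunit hθ'f) hsurj hker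
  exact ⟨e, fun x _ => he x⟩

theorem contraction_localization_antifixed
    (k A : Type*) [CommRing k] [CommRing A] [Algebra k A] [Invertible (2 : k)]
    (θ : A →ₐ[k] A) (hθ : θ.comp θ = AlgHom.id k A)
    (f : A) (hf : θ f = -f) :
    (∃! θ' : Localization.Away f →ₐ[k] Localization.Away f,
        ∀ x : A, θ' (algebraMap A (Localization.Away f) x) =
          algebraMap A (Localization.Away f) (θ x)) ∧
    ∀ (θ' : Localization.Away f →ₐ[k] Localization.Away f),
      (∀ x : A, θ' (algebraMap A (Localization.Away f) x) =
          algebraMap A (Localization.Away f) (θ x)) →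
      (θ'.comp θ' = AlgHom.id k (Localization.Away f)) ∧
      ∀ (Φ : LaurentPolynomial A →ₐ[k] LaurentPolynomial (Localization.Away f)),
        (∀ (a : A) (n : ℤ),
          Φ (C a * T n) = C (algebraMap A (Localization.Away f) a) * T n) →
        ∃ e : ↥(contraction k (Localization.Away f) θ') ≃ₐ[k]
            Localization.Away
              (⟨C f * T 1, CMulT_mem_contraction θ hf⟩ : ↥(contraction k A θ)),
          ∀ (x : ↥(contraction k A θ))
            (hx : Φ (x : LaurentPolynomial A) ∈ contraction k (Localization.Away f) θ'),
            e ⟨Φ (x : LaurentPolynomial A), hx⟩ =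
              algebraMap ↥(contraction k A θ)
                (Localization.Away
                  (⟨C f * T 1, CMulT_mem_contraction θ hf⟩ : ↥(contraction k A θ))) x :=
  contraction_localization_antifixed_general k A θ hθ f hf
end
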